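/- Let π be a Poisson tensor on ℝ^N, c a Casimir function for π, v and w Poisson vector fields for π with [v,w] = 0, and λ ∈ ℝ. Then the bivector field (x,y) ↦ π_TM(x,y) + λ c(x) (v_C ∧ w_V)(x,y) is a Poisson tensor on ℝ^N × ℝ^N. -/

import Mathlib

open scoped BigOperators

/-- Partial derivative of `f : ℝ^N → ℝ` in the `s`-th coordinate direction. -/
noncomputable def pd {N : ℕ} (f : (Fin N → ℝ) → ℝ) (s : Fin N) (x : Fin N → ℝ) : ℝ :=
  fderiv ℝ f x (Pi.single s 1)

/-- Coordinate direction on `ℝ^N × ℝ^N` indexed by `Fin N ⊕ Fin N`. -/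
noncomputable def dir (N : ℕ) (a : Fin N ⊕ Fin N) : (Fin N → ℝ) × (Fin N → ℝ) :=
  Sum.elim (fun i => (Pi.single i 1, 0)) (fun i => (0, Pi.single i 1)) a

/-- Partial derivative on `ℝ^N × ℝ^N` in the `a`-th coordinate direction. -/
noncomputable def pdT {N : ℕ} (F : (Fin N → ℝ) × (Fin N → ℝ) → ℝ)
    (a : Fin N ⊕ Fin N) (z : (Fin N → ℝ) × (Fin N → ℝ)) : ℝ :=
  fderiv ℝ F z (dir N a)

/-- `π` is a Poisson tensor on `ℝ^N`: a smooth antisymmetric bivector field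
satisfying the Jacobi identity. -/
def IsPoisson {N : ℕ} (π : (Fin N → ℝ) → Matrix (Fin N) (Fin N) ℝ) : Prop :=
  (∀ i j, ContDiff ℝ (⊤ : ℕ∞) fun x => π x i j) ∧
  (∀ x i j, π x j i = - π x i j) ∧
  (∀ x i j k, ∑ s, (π x i s * pd (fun x => π x j k) s x
      + π x j s * pd (fun x => π x k i) s x
      + π x k s * pd (fun x => π x i j) s x) = 0)

/-- `v` is a (smooth) Poisson vector field for `π` (i.e. `L_v π = 0`). -/
def IsPoissonVF {N : ℕ} (π : (Fin N → ℝ) → Matrix (Fin N) (Fin N) ℝ)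
    (v : (Fin N → ℝ) → Fin N → ℝ) : Prop :=
  (∀ i, ContDiff ℝ (⊤ : ℕ∞) fun x => v x i) ∧
  (∀ x i j, ∑ s, (pd (fun x => π x i j) s x * v x s
      - π x s j * pd (fun x => v x i) s x
      - π x i s * pd (fun x => v x j) s x) = 0)

/-- The tangent lift `π_TM` of `π` to `ℝ^N × ℝ^N`. -/
noncomputable def tlift {N : ℕ} (π : (Fin N → ℝ) → Matrix (Fin N) (Fin N) ℝ)
    (z : (Fin N → ℝ) × (Fin N → ℝ)) : Matrix (Fin N ⊕ Fin N) (Fin N ⊕ Fin N) ℝ :=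
  Matrix.of fun a b =>
    match a, b with
    | Sum.inl _, Sum.inl _ => 0
    | Sum.inl i, Sum.inr j => π z.1 i j
    | Sum.inr i, Sum.inl j => π z.1 i j
    | Sum.inr i, Sum.inr j => ∑ s, pd (fun x => π x i j) s z.1 * z.2 s

/-- The complete lift `v_C` of a vector field `v`. -/
noncomputable def liftC {N : ℕ} (v : (Fin N → ℝ) → Fin N → ℝ)
    (z : (Fin N → ℝ) × (Fin N → ℝ)) : Fin N ⊕ Fin N → ℝ :=
  Sum.elim (fun i => v z.1 i) (fun i => ∑ s, pd (fun x => v x i) s z.1 * z.2 s)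

/-- The vertical lift `v_V` of a vector field `v`. -/
def liftV {N : ℕ} (v : (Fin N → ℝ) → Fin N → ℝ)
    (z : (Fin N → ℝ) × (Fin N → ℝ)) : Fin N ⊕ Fin N → ℝ :=
  Sum.elim (fun _ => 0) (fun i => v z.1 i)

/-- The wedge `u ∧ w` of two vector fields, as a bivector field. -/
def wedge {Z ι : Type*} (u w : Z → ι → ℝ) (z : Z) : Matrix ι ι ℝ :=
  Matrix.of fun a b => u z a * w z b - u z b * w z a

/-- A Poisson tensor on `ℝ^N × ℝ^N`: a smooth antisymmetric bivector field
satisfying the Jacobi identity. -/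
def IsPoissonT {N : ℕ}
    (P : (Fin N → ℝ) × (Fin N → ℝ) → Matrix (Fin N ⊕ Fin N) (Fin N ⊕ Fin N) ℝ) : Prop :=
  (∀ a b, ContDiff ℝ (⊤ : ℕ∞) fun z => P z a b) ∧
  (∀ z a b, P z b a = - P z a b) ∧
  (∀ z a b c, ∑ s, (P z a s * pdT (fun z => P z b c) s z
      + P z b s * pdT (fun z => P z c a) s z
      + P z c s * pdT (fun z => P z a b) s z) = 0)

/-- `c` is a Casimir function for `π` on `ℝ^N`. -/
def IsCasimir {N : ℕ} (π : (Fin N → ℝ) → Matrix (Fin N) (Fin N) ℝ)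
    (c : (Fin N → ℝ) → ℝ) : Prop :=
  ContDiff ℝ (⊤ : ℕ∞) c ∧ ∀ x j, ∑ i, pd c i x * π x i j = 0

/-- `F` is a Casimir function for the bivector field `P` on `ℝ^N × ℝ^N`. -/
def IsCasimirT {N : ℕ}
    (P : (Fin N → ℝ) × (Fin N → ℝ) → Matrix (Fin N ⊕ Fin N) (Fin N ⊕ Fin N) ℝ)
    (F : (Fin N → ℝ) × (Fin N → ℝ) → ℝ) : Prop :=
  ∀ z b, ∑ a, pdT F a z * P z a b = 0

/-- `f ∘ q : ℝ^N × ℝ^N → ℝ`. -/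
def fq {N : ℕ} (f : (Fin N → ℝ) → ℝ) (z : (Fin N → ℝ) × (Fin N → ℝ)) : ℝ := f z.1

/-- The fiber-wise linear function `l_{df}` on `ℝ^N × ℝ^N`. -/
noncomputable def ldf {N : ℕ} (f : (Fin N → ℝ) → ℝ) (z : (Fin N → ℝ) × (Fin N → ℝ)) : ℝ :=
  ∑ s, pd f s z.1 * z.2 s

/-- The commutator `[v,w]` of two vector fields on `ℝ^N`. -/
noncomputable def vbr {N : ℕ} (v w : (Fin N → ℝ) → Fin N → ℝ)
    (x : Fin N → ℝ) (i : Fin N) : ℝ :=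
  ∑ s, (v x s * pd (fun x => w x i) s x - w x s * pd (fun x => v x i) s x)


section AuxToolkit

variable {N : ℕ}

theorem pd_add {f g : (Fin N → ℝ) → ℝ} {x : Fin N → ℝ} {s : Fin N}
    (hf : DifferentiableAt ℝ f x) (hg : DifferentiableAt ℝ g x) :
    pd (fun y => f y + g y) s x = pd f s x + pd g s x := by
  simp [pd, fderiv_fun_add hf hg]

theorem pd_sub {f g : (Fin N → ℝ) → ℝ} {x : Fin N → ℝ} {s : Fin N}
    (hf : DifferentiableAt ℝ f x) (hg : DifferentiableAt ℝ g x) :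
    pd (fun y => f y - g y) s x = pd f s x - pd g s x := by
  simp [pd, fderiv_fun_sub hf hg]

theorem pd_mul {f g : (Fin N → ℝ) → ℝ} {x : Fin N → ℝ} {s : Fin N}
    (hf : DifferentiableAt ℝ f x) (hg : DifferentiableAt ℝ g x) :
    pd (fun y => f y * g y) s x = pd f s x * g x + f x * pd g s x := by
  simp [pd, fderiv_fun_mul hf hg]; ring

theorem pd_neg {f : (Fin N → ℝ) → ℝ} {x : Fin N → ℝ} {s : Fin N} :
    pd (fun y => -f y) s x = - pd f s x := by
  simp [pd, fderiv_neg]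

theorem pd_const_mul {f : (Fin N → ℝ) → ℝ} {x : Fin N → ℝ} {s : Fin N} (a : ℝ)
    (hf : DifferentiableAt ℝ f x) :
    pd (fun y => a * f y) s x = a * pd f s x := by
  simp [pd, fderiv_const_mul hf]

theorem pd_sum {ι : Type*} {x : Fin N → ℝ} {s : Fin N} (u : Finset ι)
    (F : ι → (Fin N → ℝ) → ℝ)
    (hF : ∀ i ∈ u, DifferentiableAt ℝ (F i) x) :
    pd (fun y => ∑ i ∈ u, F i y) s x = ∑ i ∈ u, pd (F i) s x := by
  simp [pd, fderiv_fun_sum hF]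

theorem contDiff_pd {f : (Fin N → ℝ) → ℝ} {s : Fin N} (hf : ContDiff ℝ (⊤ : ℕ∞) f) :
    ContDiff ℝ (⊤ : ℕ∞) (fun y => pd f s y) :=
  (hf.fderiv_right (by simp)).clm_apply contDiff_const

theorem pd_comm {f : (Fin N → ℝ) → ℝ} {x : Fin N → ℝ} {s t : Fin N} (hf : ContDiff ℝ (⊤ : ℕ∞) f) :
    pd (fun y => pd f s y) t x = pd (fun y => pd f t y) s x := by
  have hd : Differentiable ℝ (fderiv ℝ f) := ((hf.fderiv_right (m := (⊤ : ℕ∞)) (by simp)).differentiable (by simp))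
  have h1 : ∀ (u w : Fin N → ℝ), fderiv ℝ (fun y => fderiv ℝ f y u) x w
      = fderiv ℝ (fderiv ℝ f) x w u := by
    intro u w
    rw [fderiv_clm_apply (hd x) (differentiableAt_const u)]
    simp
  have hsymm := second_derivative_symmetric (f' := fderiv ℝ f)
    (fun y => (hf.differentiable (by simp) y).hasFDerivAt)
    ((hd x).hasFDerivAt) (Pi.single s 1) (Pi.single t 1)
  simp only [pd, h1]
  exact hsymm.symm

theorem fderiv_comp_fst {f : (Fin N → ℝ) → ℝ} {z : (Fin N → ℝ) × (Fin N → ℝ)}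
    (hf : DifferentiableAt ℝ f z.1) (u : (Fin N → ℝ) × (Fin N → ℝ)) :
    fderiv ℝ (fun z => f z.1) z u = fderiv ℝ f z.1 u.1 := by
  have h : (fun z : (Fin N → ℝ) × (Fin N → ℝ) => f z.1) = f ∘ Prod.fst := rfl
  rw [h, fderiv_comp z hf differentiableAt_fst, fderiv_fst]
  simp

theorem pdT_fst_inl {f : (Fin N → ℝ) → ℝ} {z : (Fin N → ℝ) × (Fin N → ℝ)} {t : Fin N}
    (hf : DifferentiableAt ℝ f z.1) :
    pdT (fun z => f z.1) (Sum.inl t) z = pd f t z.1 := by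
  rw [pdT, fderiv_comp_fst hf]; rfl

theorem pdT_fst_inr {f : (Fin N → ℝ) → ℝ} {z : (Fin N → ℝ) × (Fin N → ℝ)} {t : Fin N}
    (hf : DifferentiableAt ℝ f z.1) :
    pdT (fun z => f z.1) (Sum.inr t) z = 0 := by
  rw [pdT, fderiv_comp_fst hf]
  simp [dir]

theorem snd_apply_eq_clm (s : Fin N) : (fun z : (Fin N → ℝ) × (Fin N → ℝ) => z.2 s)
    = (ContinuousLinearMap.proj (R := ℝ) (φ := fun _ : Fin N => ℝ) s).comp
      (ContinuousLinearMap.snd ℝ (Fin N → ℝ) (Fin N → ℝ)) := rfl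

theorem diff_snd_apply (s : Fin N) (z : (Fin N → ℝ) × (Fin N → ℝ)) :
    DifferentiableAt ℝ (fun z : (Fin N → ℝ) × (Fin N → ℝ) => z.2 s) z := by
  rw [snd_apply_eq_clm]; exact (ContinuousLinearMap.differentiable _).differentiableAt

theorem pdT_mul_snd_inl {f : (Fin N → ℝ) → ℝ} {z : (Fin N → ℝ) × (Fin N → ℝ)} {s t : Fin N}
    (hf : DifferentiableAt ℝ f z.1) :
    pdT (fun z => f z.1 * z.2 s) (Sum.inl t) z = pd f t z.1 * z.2 s := by
  have h1 : DifferentiableAt ℝ (fun z : (Fin N → ℝ) × (Fin N → ℝ) => f z.1) z :=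
    hf.comp z differentiableAt_fst
  rw [pdT, fderiv_fun_mul h1 (diff_snd_apply s z)]
  simp only [ContinuousLinearMap.add_apply, ContinuousLinearMap.coe_smul', Pi.smul_apply,
    smul_eq_mul]
  rw [fderiv_comp_fst hf, snd_apply_eq_clm, ContinuousLinearMap.fderiv]
  simp [dir, pd]
  ring

theorem pdT_mul_snd_inr {f : (Fin N → ℝ) → ℝ} {z : (Fin N → ℝ) × (Fin N → ℝ)} {s t : Fin N}
    (hf : DifferentiableAt ℝ f z.1) :
    pdT (fun z => f z.1 * z.2 s) (Sum.inr t) z = f z.1 * (Pi.single t 1 : Fin N → ℝ) s := by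
  have h1 : DifferentiableAt ℝ (fun z : (Fin N → ℝ) × (Fin N → ℝ) => f z.1) z :=
    hf.comp z differentiableAt_fst
  rw [pdT, fderiv_fun_mul h1 (diff_snd_apply s z)]
  simp only [ContinuousLinearMap.add_apply, ContinuousLinearMap.coe_smul', Pi.smul_apply,
    smul_eq_mul]
  rw [fderiv_comp_fst hf, snd_apply_eq_clm, ContinuousLinearMap.fderiv]
  simp [dir]

theorem pdT_sum {ι : Type*} {z : (Fin N → ℝ) × (Fin N → ℝ)} (u : Finset ι)
    (F : ι → (Fin N → ℝ) × (Fin N → ℝ) → ℝ) (a : Fin N ⊕ Fin N)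
    (hF : ∀ i ∈ u, DifferentiableAt ℝ (F i) z) :
    pdT (fun z => ∑ i ∈ u, F i z) a z = ∑ i ∈ u, pdT (F i) a z := by
  simp [pdT, fderiv_fun_sum hF]

theorem pdT_zero (a : Fin N ⊕ Fin N) (z : (Fin N → ℝ) × (Fin N → ℝ)) :
    pdT (fun _ => (0:ℝ)) a z = 0 := by
  simp [pdT]

end AuxToolkit

section AuxDefs

variable {N : ℕ} (π : (Fin N → ℝ) → Matrix (Fin N) (Fin N) ℝ) (c : (Fin N → ℝ) → ℝ)
  (v w : (Fin N → ℝ) → Fin N → ℝ) (l : ℝ)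

noncomputable def Af (i j : Fin N) (x : Fin N → ℝ) : ℝ :=
  π x i j + l * c x * (v x i * w x j)

noncomputable def Bf (i j : Fin N) (x : Fin N → ℝ) : ℝ :=
  π x i j - l * c x * (v x j * w x i)

noncomputable def Kf (i j s : Fin N) (x : Fin N → ℝ) : ℝ :=
  pd (fun x => π x i j) s x
    + l * c x * (pd (fun x => v x i) s x * w x j - pd (fun x => v x j) s x * w x i)

end AuxDefs
/-- for commuting Poisson vector fields `v, w`,
`π_TM + λ c (v_C ∧ w_V)` is a Poisson tensor. -/
theorem deformation_liftC_liftV_commuting_is_poisson {N : ℕ}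
    (π : (Fin N → ℝ) → Matrix (Fin N) (Fin N) ℝ) (c : (Fin N → ℝ) → ℝ)
    (v w : (Fin N → ℝ) → Fin N → ℝ) (l : ℝ)
    (hπ : IsPoisson π) (hc : IsCasimir π c)
    (hv : IsPoissonVF π v) (hw : IsPoissonVF π w)
    (hbr : ∀ x i, vbr v w x i = 0) :
    IsPoissonT (fun z => tlift π z + (l * c z.1) • wedge (liftC v) (liftV w) z) := by
  obtain ⟨hπs, hπa, hπj⟩ := hπ
  obtain ⟨hcs, hC⟩ := hc
  obtain ⟨hvs, hV⟩ := hv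
  obtain ⟨hws, hW⟩ := hw
  have hJ := hπj
  -- basic differentiability facts
  have dπ : ∀ (i j : Fin N) (x : Fin N → ℝ), DifferentiableAt ℝ (fun x => π x i j) x :=
    fun i j x => ((hπs i j).differentiable (by simp)).differentiableAt
  have dπ1 : ∀ (i j u : Fin N) (x : Fin N → ℝ),
      DifferentiableAt ℝ (fun x => pd (fun x => π x i j) u x) x :=
    fun i j u x => ((contDiff_pd (hπs i j)).differentiable (by simp)).differentiableAt
  have dv : ∀ (i : Fin N) (x : Fin N → ℝ), DifferentiableAt ℝ (fun x => v x i) x :=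
    fun i x => ((hvs i).differentiable (by simp)).differentiableAt
  have dv1 : ∀ (i u : Fin N) (x : Fin N → ℝ),
      DifferentiableAt ℝ (fun x => pd (fun x => v x i) u x) x :=
    fun i u x => ((contDiff_pd (hvs i)).differentiable (by simp)).differentiableAt
  have dw : ∀ (i : Fin N) (x : Fin N → ℝ), DifferentiableAt ℝ (fun x => w x i) x :=
    fun i x => ((hws i).differentiable (by simp)).differentiableAt
  have dc : ∀ (x : Fin N → ℝ), DifferentiableAt ℝ c x :=
    fun x => (hcs.differentiable (by simp)).differentiableAt
  -- antisymmetry lemmas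
  have hanti : ∀ (x : Fin N → ℝ) (i j : Fin N), π x j i = -π x i j := hπa
  have hanti1 : ∀ (x : Fin N → ℝ) (i j u : Fin N),
      pd (fun x => π x j i) u x = - pd (fun x => π x i j) u x := by
    intro x i j u
    rw [show (fun x => π x j i) = fun x => -π x i j from funext fun x => hπa x i j]
    exact pd_neg
  have hanti2 : ∀ (x : Fin N → ℝ) (i j u1 u2 : Fin N),
      pd (fun x => pd (fun x => π x j i) u1 x) u2 x
        = - pd (fun x => pd (fun x => π x i j) u1 x) u2 x := by
    intro x i j u1 u2
    rw [show (fun x => pd (fun x => π x j i) u1 x) = fun x => -pd (fun x => π x i j) u1 x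
      from funext fun x => hanti1 x i j u1]
    exact pd_neg
  have hclairp : ∀ (x : Fin N → ℝ) (i j u1 u2 : Fin N),
      pd (fun x => pd (fun x => π x i j) u1 x) u2 x
        = pd (fun x => pd (fun x => π x i j) u2 x) u1 x :=
    fun x i j u1 u2 => pd_comm (hπs i j)
  have hclairv : ∀ (x : Fin N → ℝ) (i u1 u2 : Fin N),
      pd (fun x => pd (fun x => v x i) u1 x) u2 x
        = pd (fun x => pd (fun x => v x i) u2 x) u1 x :=
    fun x i u1 u2 => pd_comm (hvs i)
  have hB : ∀ (x : Fin N → ℝ) (i : Fin N),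
      ∑ s, (v x s * pd (fun x => w x i) s x - w x s * pd (fun x => v x i) s x) = 0 := by
    intro x i
    have h := hbr x i
    simpa only [vbr] using h
  have pdzero : ∀ (g : (Fin N → ℝ) → ℝ), (∀ y, g y = 0) → ∀ (s : Fin N) (x), pd g s x = 0 := by
    intro g hg s x
    rw [show g = fun _ => (0:ℝ) from funext hg]
    simp [pd]
  -- differentiated Jacobi identity
  have hJD : ∀ (x : Fin N → ℝ) (i j k s : Fin N), (∑ t : Fin N,
      ((pd (fun x => π x i t) s x * pd (fun x => π x j k) t x
          + π x i t * pd (fun x => pd (fun x => π x j k) t x) s x)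
        + (pd (fun x => π x j t) s x * pd (fun x => π x k i) t x
          + π x j t * pd (fun x => pd (fun x => π x k i) t x) s x)
        + (pd (fun x => π x k t) s x * pd (fun x => π x i j) t x
          + π x k t * pd (fun x => pd (fun x => π x i j) t x) s x))) = 0 := by
    intro x i j k s
    have h0 : pd (fun y => ∑ t : Fin N, (π y i t * pd (fun x => π x j k) t y
        + π y j t * pd (fun x => π x k i) t y + π y k t * pd (fun x => π x i j) t y)) s x = 0 :=
      pdzero _ (fun y => hπj y i j k) s x
    have h1 : (∑ t : Fin N, pd (fun y => (π y i t * pd (fun x => π x j k) t y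
        + π y j t * pd (fun x => π x k i) t y + π y k t * pd (fun x => π x i j) t y)) s x) = 0 :=
      (pd_sum Finset.univ (fun t y => (π y i t * pd (fun x => π x j k) t y
        + π y j t * pd (fun x => π x k i) t y + π y k t * pd (fun x => π x i j) t y))
        (fun t _ => (((dπ i t x).fun_mul (dπ1 j k t x)).fun_add ((dπ j t x).fun_mul (dπ1 k i t x))).add
          ((dπ k t x).fun_mul (dπ1 i j t x)))).symm.trans h0
    rw [← h1]
    refine Finset.sum_congr rfl fun t _ => ?_
    rw [pd_add (((dπ i t x).fun_mul (dπ1 j k t x)).fun_add ((dπ j t x).fun_mul (dπ1 k i t x)))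
        ((dπ k t x).fun_mul (dπ1 i j t x)),
      pd_add ((dπ i t x).fun_mul (dπ1 j k t x)) ((dπ j t x).fun_mul (dπ1 k i t x)),
      pd_mul (dπ i t x) (dπ1 j k t x), pd_mul (dπ j t x) (dπ1 k i t x),
      pd_mul (dπ k t x) (dπ1 i j t x)]
  -- differentiated Poisson vector field identity for v
  have hVD : ∀ (x : Fin N → ℝ) (i j s : Fin N), (∑ t : Fin N,
      ((pd (fun x => pd (fun x => π x i j) t x) s x * v x t
          + pd (fun x => π x i j) t x * pd (fun x => v x t) s x)
        - (pd (fun x => π x t j) s x * pd (fun x => v x i) t x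
          + π x t j * pd (fun x => pd (fun x => v x i) t x) s x)
        - (pd (fun x => π x i t) s x * pd (fun x => v x j) t x
          + π x i t * pd (fun x => pd (fun x => v x j) t x) s x))) = 0 := by
    intro x i j s
    have h0 : pd (fun y => ∑ t : Fin N, (pd (fun x => π x i j) t y * v y t
        - π y t j * pd (fun x => v x i) t y - π y i t * pd (fun x => v x j) t y)) s x = 0 :=
      pdzero _ (fun y => hV y i j) s x
    have h1 : (∑ t : Fin N, pd (fun y => (pd (fun x => π x i j) t y * v y t
        - π y t j * pd (fun x => v x i) t y - π y i t * pd (fun x => v x j) t y)) s x) = 0 :=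
      (pd_sum Finset.univ (fun t y => (pd (fun x => π x i j) t y * v y t
          - π y t j * pd (fun x => v x i) t y - π y i t * pd (fun x => v x j) t y))
        (fun t _ => (((dπ1 i j t x).fun_mul (dv t x)).fun_sub ((dπ t j x).fun_mul (dv1 i t x))).sub
          ((dπ i t x).fun_mul (dv1 j t x)))).symm.trans h0
    rw [← h1]
    refine Finset.sum_congr rfl fun t _ => ?_
    rw [pd_sub (((dπ1 i j t x).fun_mul (dv t x)).fun_sub ((dπ t j x).fun_mul (dv1 i t x)))
        ((dπ i t x).fun_mul (dv1 j t x)),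
      pd_sub ((dπ1 i j t x).fun_mul (dv t x)) ((dπ t j x).fun_mul (dv1 i t x)),
      pd_mul (dπ1 i j t x) (dv t x), pd_mul (dπ t j x) (dv1 i t x),
      pd_mul (dπ i t x) (dv1 j t x)]
  -- smoothness of the building blocks
  have cA : ∀ (i j : Fin N), ContDiff ℝ (⊤ : ℕ∞) (Af π c v w l i j) :=
    fun i j => (hπs i j).add ((contDiff_const.mul hcs).mul ((hvs i).mul (hws j)))
  have cB : ∀ (i j : Fin N), ContDiff ℝ (⊤ : ℕ∞) (Bf π c v w l i j) :=
    fun i j => (hπs i j).sub ((contDiff_const.mul hcs).mul ((hvs j).mul (hws i)))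
  have cK : ∀ (i j s : Fin N), ContDiff ℝ (⊤ : ℕ∞) (Kf π c v w l i j s) :=
    fun i j s => (contDiff_pd (hπs i j)).add ((contDiff_const.mul hcs).mul
      (((contDiff_pd (hvs i)).mul (hws j)).sub ((contDiff_pd (hvs j)).mul (hws i))))
  have dA : ∀ (i j : Fin N) (x), DifferentiableAt ℝ (Af π c v w l i j) x :=
    fun i j x => ((cA i j).differentiable (by simp)).differentiableAt
  have dB : ∀ (i j : Fin N) (x), DifferentiableAt ℝ (Bf π c v w l i j) x :=
    fun i j x => ((cB i j).differentiable (by simp)).differentiableAt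
  have dK : ∀ (i j s : Fin N) (x), DifferentiableAt ℝ (Kf π c v w l i j s) x :=
    fun i j s x => ((cK i j s).differentiable (by simp)).differentiableAt
  -- entries of the bivector field
  have Ell : ∀ (z : (Fin N → ℝ) × (Fin N → ℝ)) (i j : Fin N),
      (tlift π z + (l * c z.1) • wedge (liftC v) (liftV w) z) (Sum.inl i) (Sum.inl j) = 0 := by
    intro z i j
    simp [tlift, wedge, liftC, liftV]
  have Elr : ∀ (z : (Fin N → ℝ) × (Fin N → ℝ)) (i j : Fin N),
      (tlift π z + (l * c z.1) • wedge (liftC v) (liftV w) z) (Sum.inl i) (Sum.inr j)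
        = Af π c v w l i j z.1 := by
    intro z i j
    simp [tlift, wedge, liftC, liftV, Af, smul_eq_mul]
    try ring
  have Erl : ∀ (z : (Fin N → ℝ) × (Fin N → ℝ)) (i j : Fin N),
      (tlift π z + (l * c z.1) • wedge (liftC v) (liftV w) z) (Sum.inr i) (Sum.inl j)
        = Bf π c v w l i j z.1 := by
    intro z i j
    simp [tlift, wedge, liftC, liftV, Bf, smul_eq_mul]
    try ring
  have Err : ∀ (z : (Fin N → ℝ) × (Fin N → ℝ)) (i j : Fin N),
      (tlift π z + (l * c z.1) • wedge (liftC v) (liftV w) z) (Sum.inr i) (Sum.inr j)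
        = ∑ s, Kf π c v w l i j s z.1 * z.2 s := by
    intro z i j
    have h1 : (tlift π z + (l * c z.1) • wedge (liftC v) (liftV w) z) (Sum.inr i) (Sum.inr j)
        = (∑ s, pd (fun x => π x i j) s z.1 * z.2 s)
          + l * c z.1 * ((∑ s, pd (fun x => v x i) s z.1 * z.2 s) * w z.1 j
            - (∑ s, pd (fun x => v x j) s z.1 * z.2 s) * w z.1 i) := by
      simp [tlift, wedge, liftC, liftV, smul_eq_mul]
      try ring
    rw [h1, Finset.sum_mul, Finset.sum_mul, mul_sub, Finset.mul_sum, Finset.mul_sum,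
      ← Finset.sum_sub_distrib, ← Finset.sum_add_distrib]
    refine Finset.sum_congr rfl fun s _ => ?_
    simp only [Kf]
    ring
  -- pdT of the entries
  have pdTA_l : ∀ (z : (Fin N → ℝ) × (Fin N → ℝ)) (i j t : Fin N),
      pdT (fun z => Af π c v w l i j z.1) (Sum.inl t) z = pd (Af π c v w l i j) t z.1 :=
    fun z i j t => pdT_fst_inl (dA i j z.1)
  have pdTA_r : ∀ (z : (Fin N → ℝ) × (Fin N → ℝ)) (i j t : Fin N),
      pdT (fun z => Af π c v w l i j z.1) (Sum.inr t) z = 0 :=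
    fun z i j t => pdT_fst_inr (dA i j z.1)
  have pdTB_l : ∀ (z : (Fin N → ℝ) × (Fin N → ℝ)) (i j t : Fin N),
      pdT (fun z => Bf π c v w l i j z.1) (Sum.inl t) z = pd (Bf π c v w l i j) t z.1 :=
    fun z i j t => pdT_fst_inl (dB i j z.1)
  have pdTB_r : ∀ (z : (Fin N → ℝ) × (Fin N → ℝ)) (i j t : Fin N),
      pdT (fun z => Bf π c v w l i j z.1) (Sum.inr t) z = 0 :=
    fun z i j t => pdT_fst_inr (dB i j z.1)
  have pdTK_l : ∀ (z : (Fin N → ℝ) × (Fin N → ℝ)) (i j t : Fin N),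
      pdT (fun z => ∑ s, Kf π c v w l i j s z.1 * z.2 s) (Sum.inl t) z
        = ∑ s, pd (Kf π c v w l i j s) t z.1 * z.2 s := by
    intro z i j t
    rw [pdT_sum Finset.univ (fun s z => Kf π c v w l i j s z.1 * z.2 s) _
      (fun s _ => ((dK i j s z.1).comp z differentiableAt_fst).fun_mul (diff_snd_apply s z))]
    exact Finset.sum_congr rfl fun s _ => pdT_mul_snd_inl (dK i j s z.1)
  have pdTK_r : ∀ (z : (Fin N → ℝ) × (Fin N → ℝ)) (i j t : Fin N),
      pdT (fun z => ∑ s, Kf π c v w l i j s z.1 * z.2 s) (Sum.inr t) z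
        = Kf π c v w l i j t z.1 := by
    intro z i j t
    rw [pdT_sum Finset.univ (fun s z => Kf π c v w l i j s z.1 * z.2 s) _
      (fun s _ => ((dK i j s z.1).comp z differentiableAt_fst).fun_mul (diff_snd_apply s z))]
    rw [Finset.sum_congr rfl fun s _ => pdT_mul_snd_inr (s := s) (dK i j s z.1)]
    simp [Pi.single_apply]
  -- expansions of the partial derivatives of the building blocks
  have pdAf : ∀ (i j t : Fin N) (x : Fin N → ℝ), pd (Af π c v w l i j) t x
      = pd (fun x => π x i j) t x + (l * pd c t x * (v x i * w x j)
        + l * c x * (pd (fun x => v x i) t x * w x j + v x i * pd (fun x => w x j) t x)) := by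
    intro i j t x
    have e : Af π c v w l i j = fun x => π x i j + (l * c x) * (v x i * w x j) := rfl
    rw [e, pd_add (dπ i j x) (((differentiableAt_const l).fun_mul (dc x)).fun_mul ((dv i x).fun_mul (dw j x))),
      pd_mul ((differentiableAt_const l).fun_mul (dc x)) ((dv i x).fun_mul (dw j x)),
      pd_mul (dv i x) (dw j x), pd_const_mul l (dc x)]
    try ring
  have pdBf : ∀ (i j t : Fin N) (x : Fin N → ℝ), pd (Bf π c v w l i j) t x
      = pd (fun x => π x i j) t x - (l * pd c t x * (v x j * w x i)
        + l * c x * (pd (fun x => v x j) t x * w x i + v x j * pd (fun x => w x i) t x)) := by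
    intro i j t x
    have e : Bf π c v w l i j = fun x => π x i j - (l * c x) * (v x j * w x i) := rfl
    rw [e, pd_sub (dπ i j x) (((differentiableAt_const l).fun_mul (dc x)).fun_mul ((dv j x).fun_mul (dw i x))),
      pd_mul ((differentiableAt_const l).fun_mul (dc x)) ((dv j x).fun_mul (dw i x)),
      pd_mul (dv j x) (dw i x), pd_const_mul l (dc x)]
    try ring
  have pdKf : ∀ (i j s t : Fin N) (x : Fin N → ℝ), pd (Kf π c v w l i j s) t x
      = pd (fun x => pd (fun x => π x i j) s x) t x
        + (l * pd c t x * (pd (fun x => v x i) s x * w x j - pd (fun x => v x j) s x * w x i)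
        + l * c x * ((pd (fun x => pd (fun x => v x i) s x) t x * w x j
            + pd (fun x => v x i) s x * pd (fun x => w x j) t x)
          - (pd (fun x => pd (fun x => v x j) s x) t x * w x i
            + pd (fun x => v x j) s x * pd (fun x => w x i) t x))) := by
    intro i j s t x
    have e : Kf π c v w l i j s = fun x => pd (fun x => π x i j) s x
        + (l * c x) * (pd (fun x => v x i) s x * w x j - pd (fun x => v x j) s x * w x i) := rfl
    rw [e, pd_add (dπ1 i j s x) (((differentiableAt_const l).fun_mul (dc x)).fun_mul
        (((dv1 i s x).fun_mul (dw j x)).fun_sub ((dv1 j s x).fun_mul (dw i x)))),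
      pd_mul ((differentiableAt_const l).fun_mul (dc x))
        (((dv1 i s x).fun_mul (dw j x)).fun_sub ((dv1 j s x).fun_mul (dw i x))),
      pd_sub ((dv1 i s x).fun_mul (dw j x)) ((dv1 j s x).fun_mul (dw i x)),
      pd_mul (dv1 i s x) (dw j x), pd_mul (dv1 j s x) (dw i x), pd_const_mul l (dc x)]
    try ring
  have key1 : ∀ (x : Fin N → ℝ) (i j k : Fin N), (∑ t : Fin N, (c x * c x * l * l * v x i * v x t * w x j * pd (fun x => w x k) t x + -(c x * c x * l * l * v x i * v x t * w x k * pd (fun x => w x j) t x) + c x * c x * l * l * v x i * pd (fun x => v x j) t x * w x k * w x t + -(c x * c x * l * l * v x i * pd (fun x => v x k) t x * w x j * w x t) + c x * l * π x i t * pd (fun x => v x j) t x * w x k + -(c x * l * π x i t * pd (fun x => v x k) t x * w x j) + -(c x * l * π x j t * v x i * pd (fun x => w x k) t x) + -(c x * l * π x j t * pd (fun x => v x i) t x * w x k) + c x * l * π x k t * v x i * pd (fun x => w x j) t x + c x * l * π x k t * pd (fun x => v x i) t x * w x j + -(c x * l * pd (fun x => π x i j) t x * v x t * w x k) + c x * l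 * pd (fun x => π x j k) t x * v x i * w x t + -(c x * l * pd (fun x => π x k i) t x * v x t * w x j) + -(pd c t x * l * π x j t * v x i * w x k) + pd c t x * l * π x k t * v x i * w x j + π x i t * pd (fun x => π x j k) t x + π x j t * pd (fun x => π x k i) t x + π x k t * pd (fun x => π x i j) t x)) = 0 := by
    intro x i j k
    have e : ∀ t : Fin N, (c x * c x * l * l * v x i * v x t * w x j * pd (fun x => w x k) t x + -(c x * c x * l * l * v x i * v x t * w x k * pd (fun x => w x j) t x) + c x * c x * l * l * v x i * pd (fun x => v x j) t x * w x k * w x t + -(c x * c x * l * l * v x i * pd (fun x => v x k) t x * w x j * w x t) + c x * l * π x i t * pd (fun x => v x j) t x * w x k + -(c x * l * π x i t * pd (fun x => v x k) t x * w x j) + -(c x * l * π x j t * v x i * pd (fun x => w x k) t x) + -(c x * l * π x j t * pd (fun x => v x i) t x * w x k) + c x * l * π x k t * v x i * pd (fun x => w x j) t x + c x * l * π x k t * pd (fun x => v x i) t x * w x j + -(c x * l * pd (fun x => π x i j) t x * v x t * w x k) + c x * l * pd (fun x => π x j k) t x * v x i * w x t + -(c x * l * pd (fun x => π x k i) t x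 * v x t * w x j) + -(pd c t x * l * π x j t * v x i * w x k) + pd c t x * l * π x k t * v x i * w x j + π x i t * pd (fun x => π x j k) t x + π x j t * pd (fun x => π x k i) t x + π x k t * pd (fun x => π x i j) t x)
        = (1) * (π x i t * pd (fun x => π x j k) t x + π x j t * pd (fun x => π x k i) t x + π x k t * pd (fun x => π x i j) t x) + (-(c x * l * w x k)) * (pd (fun x => π x i j) t x * v x t - π x t j * pd (fun x => v x i) t x - π x i t * pd (fun x => v x j) t x) + (c x * l * w x j) * (pd (fun x => π x i k) t x * v x t - π x t k * pd (fun x => v x i) t x - π x i t * pd (fun x => v x k) t x) + (c x * l * v x i) * (pd (fun x => π x j k) t x * w x t - π x t k * pd (fun x => w x j) t x - π x j t * pd (fun x => w x k) t x) + (l * v x i * w x k) * (pd c t x * π x t j) + (-(l * v x i * w x j)) * (pd c t x * π x t k) + (-(c x * c x * l * l * v x i * w x k)) * (v x t * pd (fun x => w x j) t x - w x t * pd (fun x => v x j) t x) + (c x * c x * l * l * v x i * w x j) * (v x t * pd (fun x => w x k) t x - w x t * pd (fun x => v x k) t x) := by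
      intro t
      linear_combination (c x * l * v x i * pd (fun x => w x j) t x + c x * l * pd (fun x => v x i) t x * w x j + pd c t x * l * v x i * w x j) * (hanti x k t) + (-(c x * l * pd (fun x => v x i) t x * w x k) + -(pd c t x * l * v x i * w x k)) * (hanti x j t) + (-(c x * l * v x t * w x j)) * (hanti1 x i k t)
    rw [Finset.sum_congr rfl fun t _ => e t]
    rw [Finset.sum_add_distrib, Finset.sum_add_distrib, Finset.sum_add_distrib, Finset.sum_add_distrib, Finset.sum_add_distrib, Finset.sum_add_distrib, Finset.sum_add_distrib, ← Finset.mul_sum, ← Finset.mul_sum, ← Finset.mul_sum, ← Finset.mul_sum, ← Finset.mul_sum, ← Finset.mul_sum, ← Finset.mul_sum, ← Finset.mul_sum]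
    rw [hJ x i j k, hV x i j, hV x i k, hW x j k, hC x j, hC x k, hB x j, hB x k]
    ring

  have key2 : ∀ (x : Fin N → ℝ) (i j k s : Fin N), (∑ t : Fin N, (c x * c x * l * l * v x t * pd (fun x => v x i) s x * w x j * pd (fun x => w x k) t x + -(c x * c x * l * l * v x t * pd (fun x => v x i) s x * w x k * pd (fun x => w x j) t x) + -(c x * c x * l * l * v x t * pd (fun x => v x j) s x * w x i * pd (fun x => w x k) t x) + c x * c x * l * l * v x t * pd (fun x => v x j) s x * w x k * pd (fun x => w x i) t x + c x * c x * l * l * v x t * pd (fun x => v x k) s x * w x i * pd (fun x => w x j) t x + -(c x * c x * l * l * v x t * pd (fun x => v x k) s x * w x j * pd (fun x => w x i) t x) + c x * c x * l * l * pd (fun x => v x i) s x * pd (fun x => v x j) t x * w x k * w x t + -(c x * c x * l * l * pd (fun x => v x i) s x * pd (fun x => v x k) t x * w x j * w x t) + -(c x * c x * l * l * pd (fun x => v x i) t x * pd (fun x => v x j) s x * w x k * w x t) + c x * c x * l * l * pd (fun x => v x i) t x * pd (fun x => v x k) s x * w x j * w x t + c x * c x * l * l * pd (fun x => v x j) s x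 * pd (fun x => v x k) t x * w x i * w x t + -(c x * c x * l * l * pd (fun x => v x j) t x * pd (fun x => v x k) s x * w x i * w x t) + c x * l * π x i t * pd (fun x => v x j) s x * pd (fun x => w x k) t x + -(c x * l * π x i t * pd (fun x => v x k) s x * pd (fun x => w x j) t x) + c x * l * π x i t * pd (fun x => pd (fun x => v x j) s x) t x * w x k + -(c x * l * π x i t * pd (fun x => pd (fun x => v x k) s x) t x * w x j) + -(c x * l * π x j t * pd (fun x => v x i) s x * pd (fun x => w x k) t x) + c x * l * π x j t * pd (fun x => v x k) s x * pd (fun x => w x i) t x + -(c x * l * π x j t * pd (fun x => pd (fun x => v x i) s x) t x * w x k) + c x * l * π x j t * pd (fun x => pd (fun x => v x k) s x) t x * w x i + c x * l * π x k t * pd (fun x => v x i) s x * pd (fun x => w x j) t x + -(c x * l * π x k t * pd (fun x => v x j) s x * pd (fun x => w x i) t x) + c x * l * π x k t * pd (fun x => pd (fun x => v x i) s x) t x * w x j + -(c x * l * π x k t * pd (fun x => pd (fun x => v x j) s x) t x * w x i) + c x * l * pd (fun x => π x i j) t x * pd (fun x => v x k) s x * w x t + -(c x * l * pd (fun x =>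 π x i j) t x * pd (fun x => v x t) s x * w x k) + c x * l * pd (fun x => π x i t) s x * pd (fun x => v x j) t x * w x k + -(c x * l * pd (fun x => π x i t) s x * pd (fun x => v x k) t x * w x j) + c x * l * pd (fun x => π x j k) t x * pd (fun x => v x i) s x * w x t + -(c x * l * pd (fun x => π x j k) t x * pd (fun x => v x t) s x * w x i) + -(c x * l * pd (fun x => π x j t) s x * pd (fun x => v x i) t x * w x k) + c x * l * pd (fun x => π x j t) s x * pd (fun x => v x k) t x * w x i + c x * l * pd (fun x => π x k i) t x * pd (fun x => v x j) s x * w x t + -(c x * l * pd (fun x => π x k i) t x * pd (fun x => v x t) s x * w x j) + c x * l * pd (fun x => π x k t) s x * pd (fun x => v x i) t x * w x j + -(c x * l * pd (fun x => π x k t) s x * pd (fun x => v x j) t x * w x i) + -(c x * l * pd (fun x => pd (fun x => π x i j) s x) t x * v x t * w x k) + -(c x * l * pd (fun x => pd (fun x => π x j k) s x) t x * v x t * w x i) + -(c x * l * pd (fun x => pd (fun x => π x k i) s x) t x * v x t * w x j) + pd c t x * l * π x i t * pd (fun x => v x j) s x * w x k + -(pd c t x * l * π x i t * pd (fun x =>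 v x k) s x * w x j) + -(pd c t x * l * π x j t * pd (fun x => v x i) s x * w x k) + pd c t x * l * π x j t * pd (fun x => v x k) s x * w x i + pd c t x * l * π x k t * pd (fun x => v x i) s x * w x j + -(pd c t x * l * π x k t * pd (fun x => v x j) s x * w x i) + π x i t * pd (fun x => pd (fun x => π x j k) s x) t x + π x j t * pd (fun x => pd (fun x => π x k i) s x) t x + π x k t * pd (fun x => pd (fun x => π x i j) s x) t x + pd (fun x => π x i j) t x * pd (fun x => π x k t) s x + pd (fun x => π x i t) s x * pd (fun x => π x j k) t x + pd (fun x => π x j t) s x * pd (fun x => π x k i) t x)) = 0 := by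
    intro x i j k s
    have e : ∀ t : Fin N, (c x * c x * l * l * v x t * pd (fun x => v x i) s x * w x j * pd (fun x => w x k) t x + -(c x * c x * l * l * v x t * pd (fun x => v x i) s x * w x k * pd (fun x => w x j) t x) + -(c x * c x * l * l * v x t * pd (fun x => v x j) s x * w x i * pd (fun x => w x k) t x) + c x * c x * l * l * v x t * pd (fun x => v x j) s x * w x k * pd (fun x => w x i) t x + c x * c x * l * l * v x t * pd (fun x => v x k) s x * w x i * pd (fun x => w x j) t x + -(c x * c x * l * l * v x t * pd (fun x => v x k) s x * w x j * pd (fun x => w x i) t x) + c x * c x * l * l * pd (fun x => v x i) s x * pd (fun x => v x j) t x * w x k * w x t + -(c x * c x * l * l * pd (fun x => v x i) s x * pd (fun x => v x k) t x * w x j * w x t) + -(c x * c x * l * l * pd (fun x => v x i) t x * pd (fun x => v x j) s x * w x k * w x t) + c x * c x * l * l * pd (fun x => v x i) t x * pd (fun x => v x k) s x * w x j * w x t + c x * c x * l * l * pd (fun x => v x j) s x * pd (fun x => v x k) t x * w x i * w x t + -(c x * c x * l * l * pd (fun x => v x j) t x * pd (fun x => v x k) s x * w x i * w x t) + c x * l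 * π x i t * pd (fun x => v x j) s x * pd (fun x => w x k) t x + -(c x * l * π x i t * pd (fun x => v x k) s x * pd (fun x => w x j) t x) + c x * l * π x i t * pd (fun x => pd (fun x => v x j) s x) t x * w x k + -(c x * l * π x i t * pd (fun x => pd (fun x => v x k) s x) t x * w x j) + -(c x * l * π x j t * pd (fun x => v x i) s x * pd (fun x => w x k) t x) + c x * l * π x j t * pd (fun x => v x k) s x * pd (fun x => w x i) t x + -(c x * l * π x j t * pd (fun x => pd (fun x => v x i) s x) t x * w x k) + c x * l * π x j t * pd (fun x => pd (fun x => v x k) s x) t x * w x i + c x * l * π x k t * pd (fun x => v x i) s x * pd (fun x => w x j) t x + -(c x * l * π x k t * pd (fun x => v x j) s x * pd (fun x => w x i) t x) + c x * l * π x k t * pd (fun x => pd (fun x => v x i) s x) t x * w x j + -(c x * l * π x k t * pd (fun x => pd (fun x => v x j) s x) t x * w x i) + c x * l * pd (fun x => π x i j) t x * pd (fun x => v x k) s x * w x t + -(c x * l * pd (fun x => π x i j) t x * pd (fun x => v x t) s x * w x k) + c x * l * pd (fun x => π x i t) s x * pd (fun x => v x j) t x * w x k + -(c x * l * pd (fun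 x => π x i t) s x * pd (fun x => v x k) t x * w x j) + c x * l * pd (fun x => π x j k) t x * pd (fun x => v x i) s x * w x t + -(c x * l * pd (fun x => π x j k) t x * pd (fun x => v x t) s x * w x i) + -(c x * l * pd (fun x => π x j t) s x * pd (fun x => v x i) t x * w x k) + c x * l * pd (fun x => π x j t) s x * pd (fun x => v x k) t x * w x i + c x * l * pd (fun x => π x k i) t x * pd (fun x => v x j) s x * w x t + -(c x * l * pd (fun x => π x k i) t x * pd (fun x => v x t) s x * w x j) + c x * l * pd (fun x => π x k t) s x * pd (fun x => v x i) t x * w x j + -(c x * l * pd (fun x => π x k t) s x * pd (fun x => v x j) t x * w x i) + -(c x * l * pd (fun x => pd (fun x => π x i j) s x) t x * v x t * w x k) + -(c x * l * pd (fun x => pd (fun x => π x j k) s x) t x * v x t * w x i) + -(c x * l * pd (fun x => pd (fun x => π x k i) s x) t x * v x t * w x j) + pd c t x * l * π x i t * pd (fun x => v x j) s x * w x k + -(pd c t x * l * π x i t * pd (fun x => v x k) s x * w x j) + -(pd c t x * l * π x j t * pd (fun x => v x i) s x * w x k) + pd c t x * l * π x j t * pd (fun x => v x k) s x * w x i + pd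 c t x * l * π x k t * pd (fun x => v x i) s x * w x j + -(pd c t x * l * π x k t * pd (fun x => v x j) s x * w x i) + π x i t * pd (fun x => pd (fun x => π x j k) s x) t x + π x j t * pd (fun x => pd (fun x => π x k i) s x) t x + π x k t * pd (fun x => pd (fun x => π x i j) s x) t x + pd (fun x => π x i j) t x * pd (fun x => π x k t) s x + pd (fun x => π x i t) s x * pd (fun x => π x j k) t x + pd (fun x => π x j t) s x * pd (fun x => π x k i) t x)
        = (1) * ((pd (fun x => π x i t) s x * pd (fun x => π x j k) t x + π x i t * pd (fun x => pd (fun x => π x j k) t x) s x) + (pd (fun x => π x j t) s x * pd (fun x => π x k i) t x + π x j t * pd (fun x => pd (fun x => π x k i) t x) s x) + (pd (fun x => π x k t) s x * pd (fun x => π x i j) t x + π x k t * pd (fun x => pd (fun x => π x i j) t x) s x)) + (c x * l * pd (fun x => v x k) s x) * (pd (fun x => π x i j) t x * w x t - π x t j * pd (fun x => w x i) t x - π x i t * pd (fun x => w x j) t x) + (-(c x * l * pd (fun x => v x j) s x)) * (pd (fun x => π x i k) t x * w x t - π x t k * pd (fun x => w x i) t x - π x i t * pd (fun x => w x k) t x)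 + (c x * l * pd (fun x => v x i) s x) * (pd (fun x => π x j k) t x * w x t - π x t k * pd (fun x => w x j) t x - π x j t * pd (fun x => w x k) t x) + (-(c x * l * w x k)) * ((pd (fun x => pd (fun x => π x i j) t x) s x * v x t + pd (fun x => π x i j) t x * pd (fun x => v x t) s x) - (pd (fun x => π x t j) s x * pd (fun x => v x i) t x + π x t j * pd (fun x => pd (fun x => v x i) t x) s x) - (pd (fun x => π x i t) s x * pd (fun x => v x j) t x + π x i t * pd (fun x => pd (fun x => v x j) t x) s x)) + (c x * l * w x j) * ((pd (fun x => pd (fun x => π x i k) t x) s x * v x t + pd (fun x => π x i k) t x * pd (fun x => v x t) s x) - (pd (fun x => π x t k) s x * pd (fun x => v x i) t x + π x t k * pd (fun x => pd (fun x => v x i) t x) s x) - (pd (fun x => π x i t) s x * pd (fun x => v x k) t x + π x i t * pd (fun x => pd (fun x => v x k) t x) s x)) + (-(c x * l * w x i)) * ((pd (fun x => pd (fun x => π x j k) t x) s x * v x t + pd (fun x => π x j k) t x * pd (fun x => v x t) s x) - (pd (fun x => π x t k) s x * pd (fun x => v x j) t x + π x t k * pd (fun x => pd (fun x => v x j) t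 x) s x) - (pd (fun x => π x j t) s x * pd (fun x => v x k) t x + π x j t * pd (fun x => pd (fun x => v x k) t x) s x)) + (-(l * pd (fun x => v x j) s x * w x k) + l * pd (fun x => v x k) s x * w x j) * (pd c t x * π x t i) + (l * pd (fun x => v x i) s x * w x k + -(l * pd (fun x => v x k) s x * w x i)) * (pd c t x * π x t j) + (-(l * pd (fun x => v x i) s x * w x j) + l * pd (fun x => v x j) s x * w x i) * (pd c t x * π x t k) + (c x * c x * l * l * pd (fun x => v x j) s x * w x k + -(c x * c x * l * l * pd (fun x => v x k) s x * w x j)) * (v x t * pd (fun x => w x i) t x - w x t * pd (fun x => v x i) t x) + (-(c x * c x * l * l * pd (fun x => v x i) s x * w x k) + c x * c x * l * l * pd (fun x => v x k) s x * w x i) * (v x t * pd (fun x => w x j) t x - w x t * pd (fun x => v x j) t x) + (c x * c x * l * l * pd (fun x => v x i) s x * w x j + -(c x * c x * l * l * pd (fun x => v x j) s x * w x i)) * (v x t * pd (fun x => w x k) t x - w x t * pd (fun x => v x k) t x) := by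
      intro t
      linear_combination (c x * l * pd (fun x => v x i) s x * pd (fun x => w x j) t x + -(c x * l * pd (fun x => v x j) s x * pd (fun x => w x i) t x) + c x * l * pd (fun x => pd (fun x => v x i) t x) s x * w x j + -(c x * l * pd (fun x => pd (fun x => v x j) t x) s x * w x i) + pd c t x * l * pd (fun x => v x i) s x * w x j + -(pd c t x * l * pd (fun x => v x j) s x * w x i)) * (hanti x k t) + (c x * l * pd (fun x => v x k) s x * pd (fun x => w x i) t x + -(c x * l * pd (fun x => pd (fun x => v x i) t x) s x * w x k) + -(pd c t x * l * pd (fun x => v x i) s x * w x k) + pd c t x * l * pd (fun x => v x k) s x * w x i) * (hanti x j t) + (pd c t x * l * pd (fun x => v x j) s x * w x k + -(pd c t x * l * pd (fun x => v x k) s x * w x j)) * (hanti x i t) + (c x * l * π x i t * w x j + -(c x * l * π x j t * w x i)) * (hclairv x k t s) + (-(c x * l * π x i t * w x k) + c x * l * π x k t * w x i) * (hclairv x j t s) + (c x * l * pd (fun x => v x i) t x * w x j + -(c x * l * pd (fun x => v x j) t x * w x i)) * (hanti1 x k t s) + (c x * l * v x t * w x i + -(π x i t)) * (hclairp x j k t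 s) + (c x * l * π x j t * w x k + -(c x * l * π x k t * w x j)) * (hclairv x i t s) + (-(c x * l * v x t * w x j) + π x j t) * (hclairp x i k t s) + (-(c x * l * pd (fun x => v x i) t x * w x k)) * (hanti1 x j t s) + (c x * l * v x t * w x k + -(π x k t)) * (hclairp x i j t s) + (-(π x j t)) * (hanti2 x i k t s) + (c x * l * pd (fun x => v x j) s x * w x t + -(c x * l * pd (fun x => v x t) s x * w x j)) * (hanti1 x i k t) + (-(c x * l * v x t * w x j) + π x j t) * (hanti2 x i k s t)
    rw [Finset.sum_congr rfl fun t _ => e t]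
    rw [Finset.sum_add_distrib, Finset.sum_add_distrib, Finset.sum_add_distrib, Finset.sum_add_distrib, Finset.sum_add_distrib, Finset.sum_add_distrib, Finset.sum_add_distrib, Finset.sum_add_distrib, Finset.sum_add_distrib, Finset.sum_add_distrib, Finset.sum_add_distrib, Finset.sum_add_distrib, ← Finset.mul_sum, ← Finset.mul_sum, ← Finset.mul_sum, ← Finset.mul_sum, ← Finset.mul_sum, ← Finset.mul_sum, ← Finset.mul_sum, ← Finset.mul_sum, ← Finset.mul_sum, ← Finset.mul_sum, ← Finset.mul_sum, ← Finset.mul_sum, ← Finset.mul_sum]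
    rw [hJD x i j k s, hW x i j, hW x i k, hW x j k, hVD x i j s, hVD x i k s, hVD x j k s, hC x i, hC x j, hC x k, hB x i, hB x j, hB x k]
    ring
  refine ⟨?_, ?_, ?_⟩
  · -- smoothness
    intro a b
    rcases a with i | i <;> rcases b with j | j
    · simp only [Ell]
      exact contDiff_const
    · simp only [Elr]
      exact (cA i j).comp contDiff_fst
    · simp only [Erl]
      exact (cB i j).comp contDiff_fst
    · simp only [Err]
      exact ContDiff.sum fun s _ =>
        ((cK i j s).comp contDiff_fst).mul (contDiff_pi.mp contDiff_snd s)
  · -- antisymmetry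
    intro z a b
    rcases a with i | i <;> rcases b with j | j
    · simp only [Ell]
      simp
    · simp only [Erl, Elr]
      simp only [Af, Bf]
      linear_combination hπa z.1 i j
    · simp only [Elr, Erl]
      simp only [Af, Bf]
      linear_combination hπa z.1 i j
    · simp only [Err]
      rw [← Finset.sum_neg_distrib]
      refine Finset.sum_congr rfl fun s _ => ?_
      simp only [Kf]
      linear_combination z.2 s * hanti1 z.1 i j s
  · -- Jacobi identity
    intro z a b c'
    rcases a with i | i <;> rcases b with j | j <;> rcases c' with k | k <;>
      simp only [Fintype.sum_sum_type, Ell, Elr, Erl, Err, pdT_zero, pdTA_l, pdTA_r, pdTB_l,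
        pdTB_r, pdTK_l, pdTK_r, mul_zero, zero_mul, add_zero, zero_add, Finset.sum_const_zero]
    -- remaining nontrivial cases: (l,r,r), (r,l,r), (r,r,l), (r,r,r)
    · -- (l, r, r)
      simp only [pdAf, pdBf, pdKf]
      simp only [Af, Bf, Kf]
      rw [← Finset.sum_add_distrib, ← key1 z.1 i j k]
      exact Finset.sum_congr rfl fun t _ => by ring
    · -- (r, l, r)
      simp only [pdAf, pdBf, pdKf]
      simp only [Af, Bf, Kf]
      rw [← Finset.sum_add_distrib, ← key1 z.1 j k i]
      exact Finset.sum_congr rfl fun t _ => by ring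
    · -- (r, r, l)
      simp only [pdAf, pdBf, pdKf]
      simp only [Af, Bf, Kf]
      rw [← Finset.sum_add_distrib, ← key1 z.1 k i j]
      exact Finset.sum_congr rfl fun t _ => by ring
    · -- (r, r, r)
      simp only [pdAf, pdBf, pdKf]
      simp only [Af, Bf, Kf]
      simp only [Finset.mul_sum, Finset.sum_mul]
      simp only [← Finset.sum_add_distrib]
      rw [Finset.sum_comm]
      refine Finset.sum_eq_zero fun s _ => ?_
      rw [show (0:ℝ) = (∑ t : Fin N, (c z.1 * c z.1 * l * l * v z.1 t * pd (fun x => v x i) s z.1 * w z.1 j * pd (fun x => w x k) t z.1 + -(c z.1 * c z.1 * l * l * v z.1 t * pd (fun x => v x i) s z.1 * w z.1 k * pd (fun x => w x j) t z.1) + -(c z.1 * c z.1 * l * l * v z.1 t * pd (fun x => v x j) s z.1 * w z.1 i * pd (fun x => w x k) t z.1) + c z.1 * c z.1 * l * l * v z.1 t * pd (fun x => v x j) s z.1 * w z.1 k * pd (fun x => w x i) t z.1 + c z.1 * c z.1 * l * l * v z.1 t * pd (fun x => v x k) s z.1 * w z.1 i * pd (fun x => w x j) t z.1 + -(c z.1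 * c z.1 * l * l * v z.1 t * pd (fun x => v x k) s z.1 * w z.1 j * pd (fun x => w x i) t z.1) + c z.1 * c z.1 * l * l * pd (fun x => v x i) s z.1 * pd (fun x => v x j) t z.1 * w z.1 k * w z.1 t + -(c z.1 * c z.1 * l * l * pd (fun x => v x i) s z.1 * pd (fun x => v x k) t z.1 * w z.1 j * w z.1 t) + -(c z.1 * c z.1 * l * l * pd (fun x => v x i) t z.1 * pd (fun x => v x j) s z.1 * w z.1 k * w z.1 t) + c z.1 * c z.1 * l * l * pd (fun x => v x i) t z.1 * pd (fun x => v x k) s z.1 * w z.1 j * w z.1 t + c z.1 * c z.1 * l * l * pd (fun x => v x j) s z.1 * pd (fun x => v x k) t z.1 * w z.1 i * w z.1 t + -(c z.1 * c z.1 * l * l * pd (fun x => v x j) t z.1 * pd (fun x => v x k) s z.1 * w z.1 i * w z.1 t) + c z.1 * l * π z.1 i t * pd (fun x => v x j) s z.1 * pd (fun x => w x k) t z.1 + -(c z.1 * l * π z.1 i t * pd (fun x => v x k) s z.1 * pd (fun x => w x j) t z.1) + c z.1 * l * π z.1 i t * pd (fun x => pd (fun x => v x j) s x) t z.1 * w z.1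 k + -(c z.1 * l * π z.1 i t * pd (fun x => pd (fun x => v x k) s x) t z.1 * w z.1 j) + -(c z.1 * l * π z.1 j t * pd (fun x => v x i) s z.1 * pd (fun x => w x k) t z.1) + c z.1 * l * π z.1 j t * pd (fun x => v x k) s z.1 * pd (fun x => w x i) t z.1 + -(c z.1 * l * π z.1 j t * pd (fun x => pd (fun x => v x i) s x) t z.1 * w z.1 k) + c z.1 * l * π z.1 j t * pd (fun x => pd (fun x => v x k) s x) t z.1 * w z.1 i + c z.1 * l * π z.1 k t * pd (fun x => v x i) s z.1 * pd (fun x => w x j) t z.1 + -(c z.1 * l * π z.1 k t * pd (fun x => v x j) s z.1 * pd (fun x => w x i) t z.1) + c z.1 * l * π z.1 k t * pd (fun x => pd (fun x => v x i) s x) t z.1 * w z.1 j + -(c z.1 * l * π z.1 k t * pd (fun x => pd (fun x => v x j) s x) t z.1 * w z.1 i) + c z.1 * l * pd (fun x => π x i j) t z.1 * pd (fun x => v x k) s z.1 * w z.1 t + -(c z.1 * l * pd (fun x => π x i j) t z.1 * pd (fun x => v x t) s z.1 * w z.1 k) + c z.1 * l * pd (fun x => π x i t) s z.1 * pd (fun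 x => v x j) t z.1 * w z.1 k + -(c z.1 * l * pd (fun x => π x i t) s z.1 * pd (fun x => v x k) t z.1 * w z.1 j) + c z.1 * l * pd (fun x => π x j k) t z.1 * pd (fun x => v x i) s z.1 * w z.1 t + -(c z.1 * l * pd (fun x => π x j k) t z.1 * pd (fun x => v x t) s z.1 * w z.1 i) + -(c z.1 * l * pd (fun x => π x j t) s z.1 * pd (fun x => v x i) t z.1 * w z.1 k) + c z.1 * l * pd (fun x => π x j t) s z.1 * pd (fun x => v x k) t z.1 * w z.1 i + c z.1 * l * pd (fun x => π x k i) t z.1 * pd (fun x => v x j) s z.1 * w z.1 t + -(c z.1 * l * pd (fun x => π x k i) t z.1 * pd (fun x => v x t) s z.1 * w z.1 j) + c z.1 * l * pd (fun x => π x k t) s z.1 * pd (fun x => v x i) t z.1 * w z.1 j + -(c z.1 * l * pd (fun x => π x k t) s z.1 * pd (fun x => v x j) t z.1 * w z.1 i) + -(c z.1 * l * pd (fun x => pd (fun x => π x i j) s x) t z.1 * v z.1 t * w z.1 k) + -(c z.1 * l * pd (fun x => pd (fun x => π x j k) s x) t z.1 * v z.1 t * w z.1 i) + -(c z.1 * l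 * pd (fun x => pd (fun x => π x k i) s x) t z.1 * v z.1 t * w z.1 j) + pd c t z.1 * l * π z.1 i t * pd (fun x => v x j) s z.1 * w z.1 k + -(pd c t z.1 * l * π z.1 i t * pd (fun x => v x k) s z.1 * w z.1 j) + -(pd c t z.1 * l * π z.1 j t * pd (fun x => v x i) s z.1 * w z.1 k) + pd c t z.1 * l * π z.1 j t * pd (fun x => v x k) s z.1 * w z.1 i + pd c t z.1 * l * π z.1 k t * pd (fun x => v x i) s z.1 * w z.1 j + -(pd c t z.1 * l * π z.1 k t * pd (fun x => v x j) s z.1 * w z.1 i) + π z.1 i t * pd (fun x => pd (fun x => π x j k) s x) t z.1 + π z.1 j t * pd (fun x => pd (fun x => π x k i) s x) t z.1 + π z.1 k t * pd (fun x => pd (fun x => π x i j) s x) t z.1 + pd (fun x => π x i j) t z.1 * pd (fun x => π x k t) s z.1 + pd (fun x => π x i t) s z.1 * pd (fun x => π x j k) t z.1 + pd (fun x => π x j t) s z.1 * pd (fun x => π x k i) t z.1)) * z.2 s by rw [key2 z.1 i j k s, zero_mul],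
        Finset.sum_mul]
      exact Finset.sum_congr rfl fun t _ => by ring
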